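/- Let H be an infinite-dimensional Hilbert space. Then there exists an unbounded left centralizer of F(H), the finite-rank operators on H; hence not every left centralizer of the Pedersen ideal of K(H) is bounded. -/

import Mathlib

/-!
Left composition `x ↦ t ∘ x` with any linear map `t : H → H` preserves `F(H)`, since `t` is
automatically continuous on the finite-dimensional range of `x`, and it is a left centralizer by
associativity. Testing a bound `‖t ∘ x‖ ≤ C ‖x‖` on the rank-one operators `x = w ⊗ w̄` gives
`‖t w‖ ≤ C ‖w‖`, so a discontinuous `t`, which exists on every infinite-dimensional space by
choosing its values on a Hamel basis, yields an unbounded left centralizer.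
-/

open scoped ComplexOrder

noncomputable section

variable {H : Type*} [NormedAddCommGroup H] [InnerProductSpace ℂ H] [CompleteSpace H]

/-- The subspace `F(H)` of bounded finite-rank operators on `H`
(the Pedersen ideal of the C*-algebra `K(H)` of compact operators). -/
def FR (H : Type*) [NormedAddCommGroup H] [InnerProductSpace ℂ H] :
    Submodule ℂ (H →L[ℂ] H) where
  carrier := {x | FiniteDimensional ℂ (LinearMap.range (x : H →ₗ[ℂ] H))}
  add_mem' := by
    intro a b ha hb
    simp only [Set.mem_setOf_eq] at *
    haveI := ha; haveI := hb
    haveI : FiniteDimensional ℂ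
        ↥(LinearMap.range (a : H →ₗ[ℂ] H) ⊔ LinearMap.range (b : H →ₗ[ℂ] H)) :=
      Submodule.finiteDimensional_sup _ _
    exact Submodule.finiteDimensional_of_le
      (show LinearMap.range ((a + b : H →L[ℂ] H) : H →ₗ[ℂ] H) ≤
          LinearMap.range (a : H →ₗ[ℂ] H) ⊔ LinearMap.range (b : H →ₗ[ℂ] H) by
        rintro x ⟨u, rfl⟩
        exact Submodule.mem_sup.2 ⟨a u, ⟨u, rfl⟩, b u, ⟨u, rfl⟩, by simp⟩)
  zero_mem' := by
    simp only [Set.mem_setOf_eq]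
    exact Submodule.finiteDimensional_of_le (show _ ≤ (⊥ : Submodule ℂ H) by
      rintro x ⟨u, rfl⟩; simp)
  smul_mem' := by
    intro c a ha
    simp only [Set.mem_setOf_eq] at *
    haveI := ha
    exact Submodule.finiteDimensional_of_le
      (show LinearMap.range ((c • a : H →L[ℂ] H) : H →ₗ[ℂ] H) ≤
          LinearMap.range (a : H →ₗ[ℂ] H) by
        rintro x ⟨u, rfl⟩
        exact ⟨c • u, by simp [map_smul]⟩)

/-- The rank-one operator `v ⊗ w̄ : u ↦ ⟨u, w⟩ v`. -/
noncomputable def rankOne (v w : H) : H →L[ℂ] H := (innerSL ℂ w).smulRight v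

/-- `T` is a left centralizer of `F(H)`: it maps `F(H)` into `F(H)` and
`T(xy) = (Tx)y` for all `x, y ∈ F(H)`. -/
def IsLeftCentralizer (T : FR H →ₗ[ℂ] (H →L[ℂ] H)) : Prop :=
  (∀ x : FR H, T x ∈ FR H) ∧
  ∀ (x y : FR H) (h : (x : H →L[ℂ] H) * (y : H →L[ℂ] H) ∈ FR H),
    T ⟨(x : H →L[ℂ] H) * (y : H →L[ℂ] H), h⟩ = T x * (y : H →L[ℂ] H)

section UnboundedOperator

variable {𝕜 E : Type*} [RCLike 𝕜] [NormedAddCommGroup E] [NormedSpace 𝕜 E]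

theorem LinearMap.exists_not_bounded_of_not_finiteDimensional (hE : ¬ FiniteDimensional 𝕜 E) :
    ∃ t : E →ₗ[𝕜] E, ¬ ∃ C : ℝ, ∀ w, ‖t w‖ ≤ C * ‖w‖ := by
  let b := Module.Basis.ofVectorSpace 𝕜 E
  have : Infinite (Module.Basis.ofVectorSpaceIndex 𝕜 E) := by
    rw [← not_finite_iff_infinite]
    exact fun _ ↦ hE (Module.Finite.of_basis b)
  let e := Infinite.natEmbedding (Module.Basis.ofVectorSpaceIndex 𝕜 E)
  let t := b.constr 𝕜 (Function.extend e (fun n ↦ (n : 𝕜) • b (e n)) 0)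
  have ht (n : ℕ) : t (b (e n)) = (n : 𝕜) • b (e n) := by
    rw [b.constr_basis, e.injective.extend_apply]
  refine ⟨t, fun ⟨C, hC⟩ ↦ ?_⟩
  obtain ⟨n, hn⟩ := exists_nat_gt C
  have hbound := hC (b (e n))
  rw [ht, norm_smul, RCLike.norm_natCast] at hbound
  exact hn.not_ge (le_of_mul_le_mul_right hbound (norm_pos_iff.2 (b.ne_zero _)))

end UnboundedOperator

theorem LinearMap.continuous_comp_of_finiteDimensional_range {𝕜 E F G : Type*}
    [NontriviallyNormedField 𝕜] [CompleteSpace 𝕜] [NormedAddCommGroup E] [NormedSpace 𝕜 E]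
    [NormedAddCommGroup F] [NormedSpace 𝕜 F] [NormedAddCommGroup G] [NormedSpace 𝕜 G]
    (t : F →ₗ[𝕜] G) (x : E →L[𝕜] F) [FiniteDimensional 𝕜 (LinearMap.range (x : E →ₗ[𝕜] F))] :
    Continuous (t ∘ₗ (x : E →ₗ[𝕜] F)) :=
  (t.domRestrict _).continuous_of_finiteDimensional.comp
    (x.continuous.subtype_mk fun u ↦ LinearMap.mem_range_self _ u)

namespace FR

variable {E : Type*} [NormedAddCommGroup E] [InnerProductSpace ℂ E]

instance (x : FR E) : FiniteDimensional ℂ (LinearMap.range ((x : E →L[ℂ] E) : E →ₗ[ℂ] E)) := x.2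

def leftComp (t : E →ₗ[ℂ] E) : FR E →ₗ[ℂ] (E →L[ℂ] E) where
  toFun x := ⟨t ∘ₗ (x : E →L[ℂ] E), t.continuous_comp_of_finiteDimensional_range _⟩
  map_add' x y := by ext; simp
  map_smul' c x := by ext; simp

theorem leftComp_mem (t : E →ₗ[ℂ] E) (x : FR E) : leftComp t x ∈ FR E := by
  change FiniteDimensional ℂ (LinearMap.range (t ∘ₗ ((x : E →L[ℂ] E) : E →ₗ[ℂ] E)))
  rw [LinearMap.range_comp]
  infer_instance

theorem isLeftCentralizer_leftComp (t : E →ₗ[ℂ] E) : IsLeftCentralizer (leftComp t) :=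
  ⟨leftComp_mem t, fun _ _ _ ↦ rfl⟩

theorem rankOne_mem (v w : E) : rankOne v w ∈ FR E := by
  change FiniteDimensional ℂ _
  refine Submodule.finiteDimensional_of_le (S₂ := ℂ ∙ v) ?_
  rintro _ ⟨u, rfl⟩
  exact Submodule.smul_mem _ _ (Submodule.mem_span_singleton_self v)

theorem norm_le_of_leftComp_bounded {t : E →ₗ[ℂ] E} {C : ℝ}
    (hC : ∀ x : FR E, ‖leftComp t x‖ ≤ C * ‖x‖) (w : E) : ‖t w‖ ≤ C * ‖w‖ := by
  rcases eq_or_ne w 0 with rfl | hw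
  · simp
  let x : FR E := ⟨rankOne w w, rankOne_mem w w⟩
  have hx : ‖x‖ = ‖w‖ * ‖w‖ := by
    change ‖(innerSL ℂ w).smulRight w‖ = _
    rw [ContinuousLinearMap.norm_smulRight_apply, innerSL_apply_norm]
  have hxw : leftComp t x w = ((‖w‖ : ℂ) ^ 2) • t w := by
    change t (inner ℂ w w • w) = _
    rw [inner_self_eq_norm_sq_to_K, map_smul]
    rfl
  have key : ‖w‖ ^ 2 * ‖t w‖ ≤ ‖w‖ ^ 2 * (C * ‖w‖) := calc
    ‖w‖ ^ 2 * ‖t w‖ = ‖leftComp t x w‖ := by simp [hxw, norm_smul]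
    _ ≤ ‖leftComp t x‖ * ‖w‖ := (leftComp t x).le_opNorm w
    _ ≤ C * ‖x‖ * ‖w‖ := by gcongr; exact hC x
    _ = ‖w‖ ^ 2 * (C * ‖w‖) := by rw [hx]; ring
  exact le_of_mul_le_mul_left key (by positivity)

end FR

/-- if `H` is infinite dimensional then there is an unbounded left
centralizer of `F(H)`; hence not every left centralizer of the Pedersen ideal of
`K(H)` is bounded. -/
theorem stmt_11 (hH : ¬ FiniteDimensional ℂ H) :
    ∃ T : FR H →ₗ[ℂ] (H →L[ℂ] H), IsLeftCentralizer T ∧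
      ¬ ∃ C : ℝ, ∀ x : FR H, ‖T x‖ ≤ C * ‖x‖ := by
  obtain ⟨t, ht⟩ := LinearMap.exists_not_bounded_of_not_finiteDimensional hH
  exact ⟨FR.leftComp t, FR.isLeftCentralizer_leftComp t,
    fun ⟨C, hC⟩ ↦ ht ⟨C, FR.norm_le_of_leftComp_bounded hC⟩⟩
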